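/- arXiv:1706.09952 — 5 statements merged into one kernel-verified Lean document; each statement's English description precedes it below -/
import Mathlib

section
/- Let n ≥ 1 and let A, B be symmetric n×n matrices over ℂ. Suppose (s₁,t₁), (s₂,t₂), (s₃,t₃) ∈ ℂ² are three pairwise linearly independent pairs, and set cᵢ = n − rank(sᵢ·A + tᵢ·B) for i = 1,2,3 (the corank of the i-th quadric in the pencil). If c₁ + c₂ + c₃ > n, then there exists a nonzero vector w ∈ ℂⁿ with A·w = 0 and B·w = 0; that is, all quadrics in the pencil spanned by A and B have the singular point [w] in common. -/
/-!
If `A` and `B` have no common kernel vector, any two members `P`, `Q` of the pencil have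
trivially intersecting kernels. For symmetric matrices this forces `range P + range Q` to be the
whole space, so `range P ∩ range Q` has dimension `n - corank P - corank Q`. The third member is
`α P + β Q` with `α, β ≠ 0`, and `v ↦ α P v = -β Q v` embeds its kernel into `range P ∩ range Q`;
hence `c₁ + c₂ + c₃ ≤ n`.
-/

open Module Submodule LinearMap Matrix

variable {K V : Type*} [Field K] [AddCommGroup V] [Module K V]

def pencil (u v : V) : K × K →ₗ[K] V :=
  (LinearMap.toSpanSingleton K V u).coprod (LinearMap.toSpanSingleton K V v)

@[simp]
theorem pencil_apply (u v : V) (p : K × K) : pencil u v p = p.1 • u + p.2 • v := rfl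

theorem span_pair_eq_top_of_linearIndependent {p q : K × K} (h : LinearIndependent K ![p, q]) :
    span K {p, q} = ⊤ := by
  rw [← Matrix.range_cons_cons_empty p q ![]]
  exact h.span_eq_top_of_card_eq_finrank (by simp)

theorem eq_zero_of_pencil_eq_zero {p q : K × K} (h : LinearIndependent K ![p, q]) {u v : V}
    (hp : pencil u v p = 0) (hq : pencil u v q = 0) : u = 0 ∧ v = 0 := by
  have hker : span K {p, q} ≤ ker (pencil u v) :=
    span_le.2 (by simp [Set.insert_subset_iff, hp, hq])
  rw [span_pair_eq_top_of_linearIndependent h, top_le_iff, ker_eq_top] at hker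
  exact ⟨by simpa using congr($hker (1, 0)), by simpa using congr($hker (0, 1))⟩

theorem exists_eq_smul_add_smul_of_linearIndependent_pairs {p q r : K × K}
    (hpq : LinearIndependent K ![p, q]) (hrq : LinearIndependent K ![r, q])
    (hpr : LinearIndependent K ![p, r]) : ∃ α β : K, α ≠ 0 ∧ β ≠ 0 ∧ r = α • p + β • q := by
  have hr : r ∈ span K {p, q} := span_pair_eq_top_of_linearIndependent hpq ▸ mem_top
  obtain ⟨α, β, hαβ⟩ := mem_span_pair.1 hr
  refine ⟨α, β, ?_, ?_, hαβ.symm⟩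
  · rintro rfl
    simpa using LinearIndependent.pair_iff.1 hrq 1 (-β) (by simp [← hαβ])
  · rintro rfl
    simpa using LinearIndependent.pair_iff.1 hpr α (-1) (by simp [← hαβ])

section Matrix

variable {m n : Type*} [Fintype n]

theorem pencil_mulVec (A B : Matrix m n K) (p : K × K) (w : n → K) :
    pencil A B p *ᵥ w = pencil (A *ᵥ w) (B *ᵥ w) p := by
  simp [add_mulVec, smul_mulVec]

theorem ker_pencil_inf_ker_pencil {p q : K × K} (h : LinearIndependent K ![p, q])
    (A B : Matrix m n K) :
    ker (pencil A B p).mulVecLin ⊓ ker (pencil A B q).mulVecLin =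
      ker A.mulVecLin ⊓ ker B.mulVecLin := by
  ext w
  simp only [mem_inf, mem_ker, mulVecLin_apply, pencil_mulVec]
  refine ⟨fun ⟨hp, hq⟩ ↦ eq_zero_of_pencil_eq_zero h hp hq, fun ⟨hA, hB⟩ ↦ ?_⟩
  simp [hA, hB]

theorem rank_add_finrank_ker_mulVecLin (M : Matrix m n K) :
    M.rank + finrank K (ker M.mulVecLin) = Fintype.card n := by
  simpa [Matrix.rank] using M.mulVecLin.finrank_range_add_finrank_ker

theorem finrank_ker_smul_add_smul_le {M N : Matrix m n K}
    (h : ker M.mulVecLin ⊓ ker N.mulVecLin = ⊥) {α β : K} (hα : α ≠ 0) (hβ : β ≠ 0) :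
    finrank K (ker (α • M + β • N).mulVecLin) ≤
      finrank K ↥(range M.mulVecLin ⊓ range N.mulVecLin) := by
  let φ := (α • M.mulVecLin) ∘ₗ (ker (α • M + β • N).mulVecLin).subtype
  have hφ : ∀ v ∈ ker (α • M + β • N).mulVecLin, α • (M *ᵥ v) = -(β • (N *ᵥ v)) := by
    intro v hv
    simp only [mem_ker, mulVecLin_apply, add_mulVec, smul_mulVec] at hv
    exact eq_neg_of_add_eq_zero_left hv
  have hinj : Function.Injective φ := by
    rw [← ker_eq_bot, eq_bot_iff]
    rintro ⟨v, hv⟩ hφv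
    have hαM : α • (M *ᵥ v) = 0 := hφv
    have hM : M *ᵥ v = 0 := (smul_eq_zero.1 hαM).resolve_left hα
    have hN : N *ᵥ v = 0 := by
      have hβN := hφ v hv
      rw [hM, smul_zero, eq_comm, neg_eq_zero] at hβN
      exact (smul_eq_zero.1 hβN).resolve_left hβ
    have hv0 : v ∈ ker M.mulVecLin ⊓ ker N.mulVecLin := ⟨hM, hN⟩
    rw [h, mem_bot] at hv0
    simp [hv0]
  have hrange : range φ ≤ range M.mulVecLin ⊓ range N.mulVecLin := by
    rintro _ ⟨⟨v, hv⟩, rfl⟩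
    exact ⟨⟨α • v, by simp [φ]⟩, ⟨-β • v, by simp [φ, mulVec_neg, mulVec_smul, hφ v hv]⟩⟩
  calc finrank K (ker (α • M + β • N).mulVecLin) = finrank K (range φ) :=
        (finrank_range_of_inj hinj).symm
    _ ≤ _ := finrank_mono hrange

variable [Fintype m]

theorem range_mulVecLin_sup_eq_top [DecidableEq m] [DecidableEq n] {M N : Matrix m n K}
    (h : ker Mᵀ.mulVecLin ⊓ ker Nᵀ.mulVecLin = ⊥) :
    range M.mulVecLin ⊔ range N.mulVecLin = ⊤ := by
  by_contra hne
  -- a functional vanishing on both ranges is `x ⬝ᵥ ·` for a common kernel vector `x` of `Mᵀ, Nᵀ`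
  obtain ⟨f, hf0, hf⟩ := exists_le_ker_of_lt_top _ (lt_top_iff_ne_top.2 hne)
  obtain ⟨x, rfl⟩ := (dotProductEquiv K m).surjective f
  have hker : ∀ P : Matrix m n K, range P.mulVecLin ≤ ker (dotProductEquiv K m x) →
      Pᵀ *ᵥ x = 0 := by
    intro P hP
    ext j
    have hj : x ⬝ᵥ P *ᵥ Pi.single j 1 = 0 := hP ⟨Pi.single j 1, rfl⟩
    rwa [dotProduct_mulVec, dotProduct_single, mul_one, ← mulVec_transpose] at hj
  have hx : x ∈ ker Mᵀ.mulVecLin ⊓ ker Nᵀ.mulVecLin :=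
    ⟨hker M (le_sup_left.trans hf), hker N (le_sup_right.trans hf)⟩
  rw [h, mem_bot] at hx
  simp [hx] at hf0

theorem finrank_ker_add_finrank_ker_add_finrank_ker_le_card [DecidableEq n] {M N : Matrix n n K}
    (hM : M.IsSymm) (hN : N.IsSymm)
    (h : ker M.mulVecLin ⊓ ker N.mulVecLin = ⊥) {α β : K} (hα : α ≠ 0) (hβ : β ≠ 0) :
    finrank K (ker M.mulVecLin) + finrank K (ker N.mulVecLin) +
      finrank K (ker (α • M + β • N).mulVecLin) ≤ Fintype.card n := by
  have hsup := range_mulVecLin_sup_eq_top (M := M) (N := N) (by rwa [hM.eq, hN.eq])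
  have hdim := finrank_sup_add_finrank_inf_eq (range M.mulVecLin) (range N.mulVecLin)
  rw [hsup, finrank_top, finrank_fintype_fun_eq_card] at hdim
  have hinf := finrank_ker_smul_add_smul_le h hα hβ
  have hM := rank_add_finrank_ker_mulVecLin M
  have hN := rank_add_finrank_ker_mulVecLin N
  unfold Matrix.rank at hM hN
  omega

end Matrix

theorem pencil_three_low_rank_common_singular_point_general
    (n : ℕ) (A B : Matrix (Fin n) (Fin n) ℂ)
    (hA : A.IsSymm) (hB : B.IsSymm)
    (s t : Fin 3 → ℂ)
    (hpair : ∀ i j : Fin 3, i ≠ j → LinearIndependent ℂ ![(s i, t i), (s j, t j)])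
    (c : Fin 3 → ℕ)
    (hc : ∀ i : Fin 3, c i = n - (s i • A + t i • B).rank)
    (hsum : n < c 0 + c 1 + c 2) :
    ∃ w : Fin n → ℂ, w ≠ 0 ∧ A.mulVec w = 0 ∧ B.mulVec w = 0 := by
  by_contra hnone
  have hAB : ker A.mulVecLin ⊓ ker B.mulVecLin = ⊥ := by
    refine eq_bot_iff.2 fun w ⟨hAw, hBw⟩ ↦ ?_
    by_contra hw
    exact hnone ⟨w, hw, hAw, hBw⟩
  let P i := pencil A B (s i, t i)
  have hcorank : ∀ i, c i = finrank ℂ (ker (P i).mulVecLin) := fun i ↦ by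
    have hrank := rank_add_finrank_ker_mulVecLin (P i)
    simp only [P, pencil_apply, Fintype.card_fin] at hrank ⊢
    rw [hc i]
    omega
  obtain ⟨α, β, hα, hβ, h2⟩ := exists_eq_smul_add_smul_of_linearIndependent_pairs
    (hpair 0 1 (by decide)) (hpair 2 1 (by decide)) (hpair 0 2 (by decide))
  have hP2 : P 2 = α • P 0 + β • P 1 := by simp only [P, h2, map_add, map_smul]
  have hsymm : ∀ i, (P i).IsSymm := fun i ↦ (hA.smul (s i)).add (hB.smul (t i))
  have hbound := finrank_ker_add_finrank_ker_add_finrank_ker_le_card (hsymm 0) (hsymm 1)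
    (by rw [ker_pencil_inf_ker_pencil (hpair 0 1 (by decide)), hAB]) hα hβ
  rw [← hP2, Fintype.card_fin, ← hcorank, ← hcorank, ← hcorank] at hbound
  omega

/-- If a pencil of quadrics in `n` variables over `ℂ` (spanned by symmetric
matrices `A` and `B`) contains three quadrics `sᵢ • A + tᵢ • B`, for pairwise linearly
independent pairs `(sᵢ, tᵢ) ∈ ℂ²`, whose coranks `cᵢ = n - rank (sᵢ • A + tᵢ • B)` satisfy
`c₁ + c₂ + c₃ > n`, then all quadrics in the pencil have a common singular point: there is a
nonzero `w` with `A · w = 0` and `B · w = 0`. -/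
theorem pencil_three_low_rank_common_singular_point
    (n : ℕ) (hn : 1 ≤ n) (A B : Matrix (Fin n) (Fin n) ℂ)
    (hA : A.IsSymm) (hB : B.IsSymm)
    (s t : Fin 3 → ℂ)
    (hpair : ∀ i j : Fin 3, i ≠ j → LinearIndependent ℂ ![(s i, t i), (s j, t j)])
    (c : Fin 3 → ℕ)
    (hc : ∀ i : Fin 3, c i = n - (s i • A + t i • B).rank)
    (hsum : n < c 0 + c 1 + c 2) :
    ∃ w : Fin n → ℂ, w ≠ 0 ∧ A.mulVec w = 0 ∧ B.mulVec w = 0 :=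
  pencil_three_low_rank_common_singular_point_general n A B hA hB s t hpair c hc hsum
end

section
/- For every nonzero vector v ∈ V = ℂ⁵, the radical of the symmetric bilinear form B_v, namely {α ∈ ⋀²V : B_v(α,β) = 0 for all β ∈ ⋀²V}, is equal to the subspace v∧V = {v ∧ u : u ∈ V}. In particular, the singular locus of the quadric q_v is ℙ(v∧V). -/
open ExteriorAlgebra

/-- `V = ℂ⁵`. -/
abbrev V : Type := Fin 5 → ℂ

/-- The exterior algebra of `V`; its degree-`k` part `⋀[ℂ]^k V` is the `k`-th exterior power. -/
abbrev E : Type := ExteriorAlgebra ℂ V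

/-!
Choose a basis `w₀ = v, w₁, …, w₄` of `V` and write `α = ∑ aᵢⱼ wᵢ ∧ wⱼ`. In
`α ∧ (wₖ ∧ wₗ) ∧ w₀` only the terms with `{i, j}` the complement `{p, q}` of `{0, k, l}` survive,
leaving `±(a_pq - a_qp)` times the top form `w₀ ∧ ⋯ ∧ w₄`, on which `φ` does not vanish. So on the
radical `a` is symmetric on the indices `≥ 1`, those terms cancel in pairs, and `α = w₀ ∧ u`.
Conversely `v ∧ u ∧ β ∧ v = 0` because `v` occurs twice.
-/

lemma Matrix.comp_vecCons {α β : Type*} {n : ℕ} (g : α → β) (a : α) (x : Fin n → α) :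
    g ∘ vecCons a x = vecCons (g a) (g ∘ x) :=
  Fin.comp_cons g a x

lemma exists_basis_fin_zero_eq {K W : Type*} [DivisionRing K] [AddCommGroup W]
    [Module K W] {n : ℕ} (hn : Module.finrank K W = n + 1) {v : W} (hv : v ≠ 0) :
    ∃ b : Module.Basis (Fin (n + 1)) K W, b 0 = v := by
  have : Module.Finite K W := Module.finite_of_finrank_pos (by omega)
  have hli : LinearIndepOn K id ({v} : Set W) := (linearIndepOn_singleton_iff K).2 hv
  let b := Module.Basis.extend hli
  have hmem : v ∈ hli.extend (Set.subset_univ _) := hli.subset_extend _ rfl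
  have : Fintype (hli.extend (Set.subset_univ _)) := FiniteDimensional.fintypeBasisIndex b
  let e₀ := Fintype.equivFinOfCardEq ((Module.finrank_eq_card_basis b).symm.trans hn)
  let e := e₀.trans (Equiv.swap (e₀ ⟨v, hmem⟩) 0)
  refine ⟨b.reindex e, ?_⟩
  have he : e.symm 0 = ⟨v, hmem⟩ := by simp [e]
  rw [Module.Basis.reindex_apply, he, Module.Basis.extend_apply_self]

namespace AlternatingMap

section CommRing

variable {R M N : Type*} [CommRing R] [AddCommGroup M] [Module R M] [AddCommGroup N] [Module R N]

lemma map_comp_eq_zero_of_not_injective {ι : Type*} (f : M [⋀^ι]→ₗ[R] N) (u : ι → M)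
    {g : ι → ι} (hg : ¬ g.Injective) : f (u ∘ g) = 0 :=
  f.map_eq_zero_of_not_injective _ fun h => hg h.of_comp

lemma map_comp_perm_ne_zero {ι : Type*} [DecidableEq ι] [Fintype ι] (f : M [⋀^ι]→ₗ[R] N)
    {u : ι → M} (hu : f u ≠ 0) (σ : Equiv.Perm ι) : f (u ∘ σ) ≠ 0 := by
  rw [f.map_perm]
  exact (smul_ne_zero_iff_ne _).2 hu

lemma sum_sum_smul_map_comp_vecCons (f : M [⋀^Fin 5]→ₗ[R] N) (u : Fin 5 → M)
    (a : Fin 5 → Fin 5 → R) :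
    ∑ i, ∑ j, a i j • f (u ∘ ![i, j, 2, 3, 4]) = (a 0 1 - a 1 0) • f u := by
  have h01 : u ∘ ![0, 1, 2, 3, 4] = u := by ext x; fin_cases x <;> rfl
  have h10 : f (u ∘ ![1, 0, 2, 3, 4]) = -f u := by
    rw [← f.map_swap u (show (0 : Fin 5) ≠ 1 by decide)]
    congr 1; ext x; fin_cases x <;> rfl
  simp (disch := decide) only [Fin.sum_univ_five, map_comp_eq_zero_of_not_injective, smul_zero,
    zero_add, add_zero, h01, h10]
  rw [smul_neg, sub_smul, sub_eq_add_neg]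

lemma sum_sum_smul_map_comp_vecCons_perm (f : M [⋀^Fin 5]→ₗ[R] N) (u : Fin 5 → M)
    (a : Fin 5 → Fin 5 → R) (σ : Equiv.Perm (Fin 5)) :
    ∑ i, ∑ j, a i j • f (u ∘ ![i, j, σ 2, σ 3, σ 4]) =
      (a (σ 0) (σ 1) - a (σ 1) (σ 0)) • f (u ∘ σ) := by
  rw [← sum_sum_smul_map_comp_vecCons f (u ∘ σ) fun i j => a (σ i) (σ j), ← Equiv.sum_comp σ]
  simp_rw [← Equiv.sum_comp σ (fun j => a _ j • _), Matrix.comp_vecCons, Matrix.empty_eq,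
    Function.comp_apply]

end CommRing

lemma symm_of_forall_sum_sum_smul_map_comp_vecCons_eq_zero {K M N : Type*} [Field K]
    [AddCommGroup M] [Module K M] [AddCommGroup N] [Module K N]
    (f : M [⋀^Fin 5]→ₗ[K] N) {u : Fin 5 → M} (hu : f u ≠ 0) {a : Fin 5 → Fin 5 → K}
    (h : ∀ k l, ∑ i, ∑ j, a i j • f (u ∘ ![i, j, k, l, 0]) = 0) (p q : Fin 4) :
    a p.succ q.succ = a q.succ p.succ := by
  obtain rfl | hpq := eq_or_ne p q
  · rfl
  obtain ⟨k, l, hinj⟩ : ∃ k l : Fin 5, Function.Injective ![p.succ, q.succ, k, l, 0] := by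
    revert p q; decide
  let σ := Equiv.ofBijective _ hinj.bijective_of_finite
  have hσ : (a p.succ q.succ - a q.succ p.succ) • f (u ∘ σ) = 0 :=
    (f.sum_sum_smul_map_comp_vecCons_perm u a σ).symm.trans (h k l)
  exact sub_eq_zero.1 ((smul_eq_zero.1 hσ).resolve_right (f.map_comp_perm_ne_zero hu σ))

end AlternatingMap

namespace ExteriorAlgebra

variable {R M : Type*} [CommRing R] [AddCommGroup M] [Module R M]

lemma ι_mul_ι_mem_exteriorPower_two (x y : M) : ι R x * ι R y ∈ ⋀[R]^2 M := by
  rw [exteriorPower, pow_two]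
  exact Submodule.mul_mem_mul ⟨x, rfl⟩ ⟨y, rfl⟩

lemma ιMulti_fin_two (x : Fin 2 → M) : ιMulti R 2 x = ι R (x 0) * ι R (x 1) := by
  simp [ιMulti_apply, Matrix.vecTail]

lemma ιMulti_vecCons_five (a b c d e : M) :
    ιMulti R 5 ![a, b, c, d, e] = ι R a * ι R b * (ι R c * ι R d) * ι R e := by
  simp [ιMulti_apply, mul_assoc]

lemma ι_mul_ι_mul_mul_ι_self {β : ExteriorAlgebra R M} (hβ : β ∈ ⋀[R]^2 M) (x y : M) :
    ι R x * ι R y * β * ι R x = 0 := by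
  rw [← ιMulti_span_fixedDegree] at hβ
  induction hβ using Submodule.span_induction with
  | mem _ hz =>
    obtain ⟨z, rfl⟩ := hz
    rw [ιMulti_fin_two, ← ιMulti_vecCons_five]
    exact AlternatingMap.map_eq_zero_of_eq _ _ (i := 0) (j := 4) rfl (by decide)
  | zero => rw [mul_zero, zero_mul]
  | add _ _ _ _ h₁ h₂ => rw [mul_add, add_mul, h₁, h₂, add_zero]
  | smul c _ _ h => rw [mul_smul_comm, smul_mul_assoc, h, smul_zero]

open Pointwise in
lemma exists_eq_sum_sum_smul_ι_mul_ι {I : Type*} [Fintype I] (b : Module.Basis I R M)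
    {α : ExteriorAlgebra R M} (hα : α ∈ ⋀[R]^2 M) :
    ∃ a : I → I → R, α = ∑ i, ∑ j, a i j • (ι R (b i) * ι R (b j)) := by
  have hrange : LinearMap.range (ι R) = Submodule.span R (Set.range (ι R ∘ b)) := by
    rw [LinearMap.range_eq_map, ← b.span_eq, Submodule.map_span, Set.range_comp]
  have hprod : Set.range (ι R ∘ b) * Set.range (ι R ∘ b) =
      Set.range fun p : I × I => ι R (b p.1) * ι R (b p.2) := by
    ext; simp [Set.mem_mul]
  rw [exteriorPower, pow_two, hrange, Submodule.span_mul_span, hprod] at hα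
  obtain ⟨c, hc⟩ := (Submodule.mem_span_range_iff_exists_fun R).1 hα
  exact ⟨fun i j => c (i, j), by rw [← hc, Fintype.sum_prod_type]⟩

lemma sum_sum_smul_ι_mul_ι_eq_zero {I : Type*} [Fintype I] (u : I → M) {a : I → I → R}
    (ha : ∀ i j, a i j = a j i) : ∑ i, ∑ j, a i j • (ι R (u i) * ι R (u j)) = 0 := by
  rw [← Finset.sum_product']
  refine Finset.sum_involution (fun p _ => p.swap) (fun p _ => ?_) (fun p _ hp hswap => ?_)
    (fun _ _ => Finset.mem_univ _) (fun _ _ => rfl)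
  · rw [Prod.fst_swap, Prod.snd_swap, ha p.2, ← smul_add, ι_add_mul_swap, smul_zero]
  · obtain ⟨i, j⟩ := p
    obtain rfl : j = i := congrArg Prod.fst hswap
    exact hp (by rw [ι_sq_zero, smul_zero])

lemma sum_sum_smul_ι_mul_ι_eq_ι_mul_ι {n : ℕ} (u : Fin (n + 1) → M)
    {a : Fin (n + 1) → Fin (n + 1) → R} (ha : ∀ i j : Fin n, a i.succ j.succ = a j.succ i.succ) :
    ∑ i, ∑ j, a i j • (ι R (u i) * ι R (u j)) =
      ι R (u 0) * ι R (∑ j, a 0 j • u j - ∑ i : Fin n, a i.succ 0 • u i.succ) := by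
  have hrest := sum_sum_smul_ι_mul_ι_eq_zero (R := R) (u ∘ Fin.succ) ha
  simp only [Function.comp_apply] at hrest
  rw [Fin.sum_univ_succ]
  simp only [Fin.sum_univ_succ (f := fun j => a (Fin.succ _) j • _), Finset.sum_add_distrib, hrest,
    add_zero]
  rw [map_sub, mul_sub, map_sum, map_sum, Finset.mul_sum, Finset.mul_sum, sub_eq_add_neg,
    ← Finset.sum_neg_distrib]
  congr 1 <;> refine Finset.sum_congr rfl fun i _ => ?_
  · rw [map_smul, mul_smul_comm]
  · rw [map_smul, mul_smul_comm, ← smul_neg, eq_neg_of_add_eq_zero_left (ι_add_mul_swap _ _)]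

lemma sum_sum_smul_ι_mul_ι_mul_eq_sum_sum_smul_ιMulti {I : Type*} [Fintype I] (u : I → M)
    (a : I → I → R) (k l m : I) :
    (∑ i, ∑ j, a i j • (ι R (u i) * ι R (u j))) * (ι R (u k) * ι R (u l)) * ι R (u m) =
      ∑ i, ∑ j, a i j • ιMulti R 5 (u ∘ ![i, j, k, l, m]) := by
  simp only [Finset.sum_mul, smul_mul_assoc, Matrix.comp_vecCons, Matrix.empty_eq,
    ιMulti_vecCons_five]

lemma ιMulti_ne_zero_of_linearIndependent {K W : Type*} [Field K] [AddCommGroup W] [Module K W]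
    {n : ℕ} {v : Fin n → W} (hv : LinearIndependent K v) : ιMulti K n v ≠ 0 := by
  have h := (exteriorPower.ιMulti_family_linearIndependent_field (n := n) hv).ne_zero
    ⟨Finset.univ, by simp⟩
  have hid : ⇑(Finset.univ.orderEmbOfFin (by simp)) = (id : Fin n → Fin n) :=
    (Finset.orderEmbOfFin_unique _ (fun _ => Finset.mem_univ _) strictMono_id).symm
  rwa [exteriorPower.ιMulti_family, Set.powersetCard.ofFinEmbEquiv_symm_apply, hid,
    Function.comp_id, ne_eq, ← Submodule.coe_eq_zero] at h

end ExteriorAlgebra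

/-- Fix a linear functional `φ` on the exterior algebra restricting to an
isomorphism `⋀⁵V ≅ ℂ`, and for `v ∈ V` let `B_v(α, β) = φ(α ∧ β ∧ v)` on `⋀²V`.  For every
nonzero `v`, the radical `{α ∈ ⋀²V : ∀ β ∈ ⋀²V, B_v(α, β) = 0}` equals the subspace
`v ∧ V = {v ∧ u : u ∈ V}`; in particular the singular locus of `q_v` is `ℙ(v ∧ V)`. -/
theorem radical_of_Bv_eq_wedge
    (φ : E →ₗ[ℂ] ℂ)
    (hφ : Function.Bijective (φ ∘ₗ (⋀[ℂ]^5 V).subtype))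
    (v : V) (hv : v ≠ 0) :
    ∀ α ∈ ⋀[ℂ]^2 V,
      ((∀ β ∈ ⋀[ℂ]^2 V, φ (α * β * ι ℂ v) = 0) ↔ ∃ u : V, α = ι ℂ v * ι ℂ u) := by
  intro α hα
  refine ⟨fun h => ?_, ?_⟩
  · obtain ⟨w, rfl⟩ := exists_basis_fin_zero_eq (Module.finrank_fin_fun ℂ) hv
    obtain ⟨a, rfl⟩ := exists_eq_sum_sum_smul_ι_mul_ι w hα
    let f := φ.compAlternatingMap (ιMulti ℂ 5)
    have hf : f w ≠ 0 := fun h0 =>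
      ιMulti_ne_zero_of_linearIndependent w.linearIndependent <| congrArg Subtype.val <|
        (injective_iff_map_eq_zero _).1 hφ.1 ⟨_, ιMulti_range ℂ 5 ⟨w, rfl⟩⟩ h0
    have hsymm := f.symm_of_forall_sum_sum_smul_map_comp_vecCons_eq_zero hf fun k l => by
      simpa [sum_sum_smul_ι_mul_ι_mul_eq_sum_sum_smul_ιMulti, f] using
        h _ (ι_mul_ι_mem_exteriorPower_two (w k) (w l))
    exact ⟨_, sum_sum_smul_ι_mul_ι_eq_ι_mul_ι w hsymm⟩
  · rintro ⟨u, rfl⟩ β hβ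
    rw [ι_mul_ι_mul_mul_ι_self hβ, map_zero]
end

section
/- The ℂ-linear map from V = ℂ⁵ to the space of quadratic forms on ⋀²V sending v to q_v (where q_v(α) = φ(α ∧ α ∧ v)) is injective, and its image is exactly the set of quadratic forms Q on ⋀²V satisfying Q(a ∧ b) = 0 for all a, b ∈ V, i.e. the quadratic forms vanishing on the cone of decomposable 2-vectors (the affine cone over the Plücker-embedded Grassmannian Gr(2,5)). -/
open ExteriorAlgebra

/-- The decomposable 2-vector `a ∧ b` as an element of `⋀²V`. -/
noncomputable def decomp (a b : V) : ⋀[ℂ]^2 V :=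
  ⟨ι ℂ a * ι ℂ b, by
    rw [exteriorPower, pow_two]
    exact Submodule.mul_mem_mul (LinearMap.mem_range_self _ a) (LinearMap.mem_range_self _ b)⟩

/-- The symmetric bilinear form `B_v(α, β) = φ(α ∧ β ∧ v)` on `⋀²V`. -/
noncomputable def Bv (φ : E →ₗ[ℂ] ℂ) (v : V) : (⋀[ℂ]^2 V) →ₗ[ℂ] (⋀[ℂ]^2 V) →ₗ[ℂ] ℂ :=
  LinearMap.compr₂
    (LinearMap.compl₁₂ (LinearMap.mul ℂ E) (⋀[ℂ]^2 V).subtype (⋀[ℂ]^2 V).subtype)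
    (φ ∘ₗ LinearMap.mulRight ℂ (ι ℂ v))

/-- The quadratic form `q_v(α) = φ(α ∧ α ∧ v)` on `⋀²V`. -/
noncomputable def qv (φ : E →ₗ[ℂ] ℂ) (v : V) : QuadraticForm ℂ (⋀[ℂ]^2 V) :=
  LinearMap.BilinMap.toQuadraticMap (Bv φ v)

/-! A quadratic form `Q` on `⋀²V` is determined by its polar form, hence by the values
`polar Q (a ∧ b) (c ∧ d)`. If `Q` vanishes on decomposable vectors, these values form an
alternating 4-form in `(a, b, c, d)`: expanding `Q ((a + c) ∧ b) = 0` shows that they vanish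
when `b = d`, and the other coincidences follow by antisymmetry of `∧`. For `Q = q_v` the polar
form is `2 φ (v ∧ a ∧ b ∧ c ∧ d)`, because `2`-vectors are central in the exterior algebra. So
everything reduces to the map `v ↦ φ (v ∧ ·)` from `V` to alternating 4-forms on `V`. It is
injective, since on the 4-vector complementary to `e_j` it takes the value
`± v_j φ (e₁ ∧ ⋯ ∧ e₅)` and `φ (e₁ ∧ ⋯ ∧ e₅) ≠ 0`; both spaces have dimension `5 = (5 choose 4)`,
so it is bijective. -/

open Module QuadraticMap

section CommRing

variable {R M : Type*} [CommRing R] [AddCommGroup M] [Module R M]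

theorem ExteriorAlgebra.commute_ιMulti_two (m : Fin 2 → M) (x : ExteriorAlgebra R M) :
    Commute (ιMulti R 2 m) x := by
  have hanti (a b : M) : ι R a * ι R b = -(ι R b * ι R a) :=
    eq_neg_of_add_eq_zero_left (ι_add_mul_swap a b)
  induction x using ExteriorAlgebra.induction with
  | algebraMap r => exact Algebra.commutes r _ |>.symm
  | ι x =>
    simp only [ιMulti_succ_apply, ιMulti_zero_apply, mul_one]
    rw [Commute, SemiconjBy, mul_assoc, hanti _ x, mul_neg, ← mul_assoc, hanti _ x, neg_mul,
      neg_neg, mul_assoc]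
  | mul a b ha hb => exact ha.mul_right hb
  | add a b ha hb => exact ha.add_right hb

theorem exteriorPower.ιMulti_basis_comp_ne_zero [Nontrivial R] {ι : Type*} (b : Basis ι R M)
    {k : ℕ} {π : Fin k → ι} (hπ : Function.Injective π) :
    exteriorPower.ιMulti R k (b ∘ π) ≠ 0 := by
  have hdiag : Matrix.of (fun i j => (b.coord ∘ π) j ((b ∘ π) i)) = 1 := by
    ext i j
    rcases eq_or_ne i j with rfl | hij
    · simp
    · simp [Matrix.one_apply_ne hij, Finsupp.single_eq_of_ne' (hπ.ne hij)]
  intro h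
  have := congrArg (exteriorPower.pairingDual R M k (exteriorPower.ιMulti R k (b.coord ∘ π))) h
  rw [exteriorPower.pairingDual_ιMulti_ιMulti, hdiag, Matrix.det_one, map_zero] at this
  exact one_ne_zero this

theorem exteriorPower.ιMulti_two_swap (a b : M) :
    exteriorPower.ιMulti R 2 ![a, b] = -exteriorPower.ιMulti R 2 ![b, a] := by
  rw [← AlternatingMap.map_swap _ _ (zero_ne_one (α := Fin 2))]
  congr 1
  ext i
  fin_cases i <;> rfl

variable {N : Type*} [AddCommGroup N] [Module R N]

theorem QuadraticMap.ext_of_polar_ιMulti_two {Q Q' : QuadraticMap R (⋀[R]^2 M) N}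
    (h2 : IsUnit (2 : R))
    (h : ∀ m m' : Fin 2 → M, polar Q (exteriorPower.ιMulti R 2 m) (exteriorPower.ιMulti R 2 m') =
      polar Q' (exteriorPower.ιMulti R 2 m) (exteriorPower.ιMulti R 2 m')) :
    Q = Q' :=
  polarBilin_injective h2 <| exteriorPower.linearMap_ext <| AlternatingMap.ext fun m =>
    exteriorPower.linearMap_ext <| AlternatingMap.ext fun m' => h m m'

variable {Q : QuadraticMap R (⋀[R]^2 M) N} (hQ : ∀ m, Q (exteriorPower.ιMulti R 2 m) = 0)
include hQ

theorem QuadraticMap.polar_ιMulti_two_eq_zero {a b c d : M}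
    (h : a = b ∨ c = d ∨ a = c ∨ a = d ∨ b = c ∨ b = d) :
    polar Q (exteriorPower.ιMulti R 2 ![a, b]) (exteriorPower.ιMulti R 2 ![c, d]) = 0 := by
  have hself (x : M) : exteriorPower.ιMulti R 2 ![x, x] = 0 :=
    AlternatingMap.map_eq_zero_of_eq _ _ (i := 0) (j := 1) rfl zero_ne_one
  -- `x ∧ z + y ∧ z = (x + y) ∧ z` is decomposable
  have hcommon (x y z : M) :
      polar Q (exteriorPower.ιMulti R 2 ![x, z]) (exteriorPower.ιMulti R 2 ![y, z]) = 0 := by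
    rw [polar, ← AlternatingMap.map_vecCons_add, hQ, hQ, hQ, sub_zero, sub_zero]
  rcases h with rfl | rfl | rfl | rfl | rfl | rfl
  · rw [hself, polar_zero_left]
  · rw [hself, polar_zero_right]
  · rw [exteriorPower.ιMulti_two_swap a, exteriorPower.ιMulti_two_swap a, polar_neg_left,
      polar_neg_right, hcommon, neg_zero, neg_zero]
  · rw [exteriorPower.ιMulti_two_swap a, polar_neg_left, hcommon, neg_zero]
  · rw [exteriorPower.ιMulti_two_swap b, polar_neg_right, hcommon, neg_zero]
  · exact hcommon a c b

noncomputable def QuadraticMap.polarWedgeForm : M [⋀^Fin 4]→ₗ[R] N where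
  toMultilinearMap :=
    ((TensorProduct.lift (polarBilin Q)).compMultilinearMap
      ((exteriorPower.ιMulti R 2).toMultilinearMap.domCoprod
        (exteriorPower.ιMulti R 2).toMultilinearMap)).domDomCongr finSumFinEquiv
  map_eq_zero_of_eq' v i j hv hij := by
    have hleft : (fun k => v (finSumFinEquiv (m := 2) (n := 2) (Sum.inl k))) = ![v 0, v 1] := by
      ext k; fin_cases k <;> rfl
    have hright : (fun k => v (finSumFinEquiv (m := 2) (n := 2) (Sum.inr k))) = ![v 2, v 3] := by
      ext k; fin_cases k <;> rfl
    simp only [MultilinearMap.toFun_eq_coe, MultilinearMap.domDomCongr_apply,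
      LinearMap.compMultilinearMap_apply, MultilinearMap.domCoprod_apply,
      TensorProduct.lift.tmul, polarBilin_apply_apply, AlternatingMap.coe_multilinearMap,
      hleft, hright]
    refine polar_ιMulti_two_eq_zero hQ ?_
    fin_cases i <;> fin_cases j <;> simp_all

theorem QuadraticMap.polarWedgeForm_append (m m' : Fin 2 → M) :
    polarWedgeForm hQ (Fin.append m m') =
      polar Q (exteriorPower.ιMulti R 2 m) (exteriorPower.ιMulti R 2 m') := by
  change polar Q (exteriorPower.ιMulti R 2 fun i => Fin.append m m' (Fin.castAdd 2 i))
    (exteriorPower.ιMulti R 2 fun i => Fin.append m m' (Fin.natAdd 2 i)) = _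
  simp only [Fin.append_left, Fin.append_right]

end CommRing

section Field

variable {K M : Type*} [Field K] [AddCommGroup M] [Module K M] {n : ℕ}

instance AlternatingMap.instFiniteDimensional [FiniteDimensional K M] :
    FiniteDimensional K (M [⋀^Fin n]→ₗ[K] K) :=
  (exteriorPower.alternatingMapLinearEquiv (R := K) (M := M) (N := K) (n := n)).symm
    |>.finiteDimensional

theorem AlternatingMap.finrank_eq_choose [FiniteDimensional K M] :
    finrank K (M [⋀^Fin n]→ₗ[K] K) = (finrank K M).choose n := by
  rw [(exteriorPower.alternatingMapLinearEquiv (R := K) (M := M) (N := K) (n := n)).finrank_eq,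
    Subspace.dual_finrank_eq, exteriorPower.finrank_eq]

noncomputable def wedgeForm (φ : ExteriorAlgebra K M →ₗ[K] K) :
    M →ₗ[K] M [⋀^Fin n]→ₗ[K] K :=
  (φ.compAlternatingMap (ιMulti K (n + 1))).curryLeft

theorem wedgeForm_apply (φ : ExteriorAlgebra K M →ₗ[K] K) (v : M) (m : Fin n → M) :
    wedgeForm φ v m = φ (ι K v * ιMulti K n m) := by
  simp [wedgeForm, ιMulti_succ_apply]

variable {φ : ExteriorAlgebra K M →ₗ[K] K}

theorem wedgeForm_basis_succAbove (b : Basis (Fin (n + 1)) K M) (v : M) (j : Fin (n + 1)) :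
    wedgeForm φ v (b ∘ j.succAbove) = b.repr v j * wedgeForm φ (b j) (b ∘ j.succAbove) := by
  have hvanish (k : Fin (n + 1)) (hk : k ≠ j) : wedgeForm φ (b k) (b ∘ j.succAbove) = 0 := by
    obtain ⟨i, rfl⟩ := Fin.exists_succAbove_eq hk
    rw [wedgeForm, AlternatingMap.curryLeft_apply_apply, LinearMap.compAlternatingMap_apply,
      AlternatingMap.map_eq_zero_of_eq _ _ (i := 0) (j := i.succ) (by simp)
        (Fin.succ_ne_zero i).symm, map_zero]
  simp only [wedgeForm_apply] at hvanish ⊢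
  conv_lhs => rw [← b.sum_repr v]
  rw [map_sum, Finset.sum_mul, map_sum, Finset.sum_eq_single j
    (fun k _ hk => by rw [map_smul, smul_mul_assoc, map_smul, hvanish k hk, smul_zero])
    (by simp), map_smul, smul_mul_assoc, map_smul, smul_eq_mul]

theorem wedgeForm_basis_self_ne_zero (b : Basis (Fin (n + 1)) K M)
    (hφ : Function.Injective (φ ∘ₗ (⋀[K]^(n + 1) M).subtype)) (j : Fin (n + 1)) :
    wedgeForm φ (b j) (b ∘ j.succAbove) ≠ 0 := by
  have hπ : Function.Injective (Fin.cons j j.succAbove : Fin (n + 1) → Fin (n + 1)) :=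
    Fin.cons_injective_iff.2
      ⟨fun ⟨i, hi⟩ => Fin.succAbove_ne j i hi, Fin.succAbove_right_injective⟩
  have hcons : Matrix.vecCons (b j) (b ∘ j.succAbove) = b ∘ Fin.cons j j.succAbove := by
    ext i; cases i using Fin.cases <;> rfl
  rw [wedgeForm, AlternatingMap.curryLeft_apply_apply, LinearMap.compAlternatingMap_apply, hcons,
    ← exteriorPower.ιMulti_apply_coe]
  exact (map_ne_zero_iff _ hφ).2 (exteriorPower.ιMulti_basis_comp_ne_zero b hπ)

theorem wedgeForm_injective [FiniteDimensional K M] (hM : finrank K M = n + 1)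
    (hφ : Function.Injective (φ ∘ₗ (⋀[K]^(n + 1) M).subtype)) :
    Function.Injective (wedgeForm φ (n := n)) := by
  let b := Module.finBasisOfFinrankEq K M hM
  refine (injective_iff_map_eq_zero _).2 fun v hv => b.ext_elem fun j => ?_
  have := wedgeForm_basis_succAbove (φ := φ) b v j
  rw [hv, AlternatingMap.zero_apply, eq_comm, mul_eq_zero] at this
  simpa using this.resolve_right (wedgeForm_basis_self_ne_zero b hφ j)

theorem wedgeForm_bijective [FiniteDimensional K M] (hM : finrank K M = n + 1)
    (hφ : Function.Injective (φ ∘ₗ (⋀[K]^(n + 1) M).subtype)) :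
    Function.Bijective (wedgeForm φ (n := n)) := by
  have hinj := wedgeForm_injective hM hφ
  refine ⟨hinj, (LinearMap.injective_iff_surjective_of_finrank_eq_finrank ?_).1 hinj⟩
  rw [AlternatingMap.finrank_eq_choose, hM, Nat.choose_succ_self_right]

end Field

theorem ιMulti_two_eq_decomp (m : Fin 2 → V) :
    exteriorPower.ιMulti ℂ 2 m = decomp (m 0) (m 1) :=
  Subtype.ext <| by simp [decomp, ιMulti_succ_apply, Matrix.vecTail]

theorem Bv_apply (φ : E →ₗ[ℂ] ℂ) (v : V) (x y : ⋀[ℂ]^2 V) :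
    Bv φ v x y = φ (x * y * ι ℂ v) :=
  rfl

theorem polar_qv_ιMulti_two (φ : E →ₗ[ℂ] ℂ) (v : V) (m m' : Fin 2 → V) :
    polar (qv φ v) (exteriorPower.ιMulti ℂ 2 m) (exteriorPower.ιMulti ℂ 2 m') =
      2 * wedgeForm φ v (Fin.append m m') := by
  have hBv (m m' : Fin 2 → V) : Bv φ v (exteriorPower.ιMulti ℂ 2 m) (exteriorPower.ιMulti ℂ 2 m') =
      φ (ι ℂ v * (ιMulti ℂ 2 m * ιMulti ℂ 2 m')) := by
    rw [Bv_apply, exteriorPower.ιMulti_apply_coe, exteriorPower.ιMulti_apply_coe,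
      ((commute_ιMulti_two m _).mul_left (commute_ιMulti_two m' _)).eq]
  rw [qv, LinearMap.BilinMap.polar_toQuadraticMap, hBv, hBv, (commute_ιMulti_two m' _).eq,
    ← two_mul, wedgeForm_apply, ιMulti_mul_ιMulti]

theorem qv_ιMulti_two (φ : E →ₗ[ℂ] ℂ) (v : V) (m : Fin 2 → V) :
    qv φ v (exteriorPower.ιMulti ℂ 2 m) = 0 := by
  have hsq : ιMulti ℂ 2 m * ιMulti ℂ 2 m = 0 := by
    rw [ιMulti_mul_ιMulti]
    exact AlternatingMap.map_eq_zero_of_eq _ _ (i := 0) (j := 2) rfl (by decide)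
  rw [qv, LinearMap.BilinMap.toQuadraticMap_apply, Bv_apply, exteriorPower.ιMulti_apply_coe, hsq,
    zero_mul, map_zero]

/-- Fix a linear functional `φ` on the exterior algebra restricting to an
isomorphism `⋀⁵V ≅ ℂ`.  The linear map `v ↦ q_v`, `q_v(α) = φ(α ∧ α ∧ v)`, from `V` to
quadratic forms on `⋀²V` is injective, and its image is exactly the set of quadratic forms
vanishing on all decomposable 2-vectors `a ∧ b` (the affine cone over the Plücker-embedded
Grassmannian `Gr(2,5)`). -/
theorem qv_injective_and_range_eq_vanishing_on_grassmannian
    (φ : E →ₗ[ℂ] ℂ)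
    (hφ : Function.Bijective (φ ∘ₗ (⋀[ℂ]^5 V).subtype)) :
    Function.Injective (qv φ) ∧
    Set.range (qv φ) =
      {Q : QuadraticForm ℂ (⋀[ℂ]^2 V) | ∀ a b : V, Q (decomp a b) = 0} := by
  have hbij := wedgeForm_bijective (φ := φ) (n := 4) (Module.finrank_fin_fun ℂ) hφ.injective
  refine ⟨fun v v' h => hbij.injective <| AlternatingMap.ext fun m => ?_, ?_⟩
  · obtain ⟨m₁, m₂, rfl⟩ : ∃ m₁ m₂ : Fin 2 → V, m = Fin.append m₁ m₂ :=
      ⟨_, _, (Fin.append_castAdd_natAdd (m := 2) (n := 2) (f := m)).symm⟩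
    refine mul_left_cancel₀ two_ne_zero ?_
    rw [← polar_qv_ιMulti_two, ← polar_qv_ιMulti_two, h]
  ext Q
  refine ⟨?_, fun hQ => ?_⟩
  · rintro ⟨v, rfl⟩ a b
    exact ιMulti_two_eq_decomp ![a, b] ▸ qv_ιMulti_two φ v ![a, b]
  have hQ' (m : Fin 2 → V) : Q (exteriorPower.ιMulti ℂ 2 m) = 0 := by
    rw [ιMulti_two_eq_decomp]; exact hQ _ _
  obtain ⟨v, hv⟩ := hbij.surjective ((2 : ℂ)⁻¹ • polarWedgeForm hQ')
  refine ⟨v, ext_of_polar_ιMulti_two (isUnit_of_invertible 2) fun m m' => ?_⟩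
  rw [polar_qv_ιMulti_two, hv, AlternatingMap.smul_apply, polarWedgeForm_append, smul_eq_mul,
    mul_inv_cancel_left₀ two_ne_zero]
end

section
/- Let v, u, w ∈ V = ℂ⁵ be linearly independent and let v' ∈ V be nonzero. Then both v ∧ u and v ∧ w lie in the subspace v'∧V if and only if v' ∈ span{v}. In particular, the line {[v ∧ (s·u + t·w)] : (s,t) ∈ ℂ²∖{0}} on Gr(2,5) is contained in the singular locus ℙ(v'∧V) of the quadric q_{v'} for exactly one point [v'] = [v] of ℙV, i.e. any line on Gr(2,5) is contained in the singular locus of a unique quadric containing Gr(2,5). -/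
open ExteriorAlgebra

/-- A family of alternating maps supported in degree 3. -/
noncomputable def liftF (f : V [⋀^Fin 3]→ₗ[ℂ] ℂ) : ∀ i, V [⋀^Fin i]→ₗ[ℂ] ℂ :=
  fun i => match i with
  | 3 => f
  | _ => 0

lemma liftF_eval (f : V [⋀^Fin 3]→ₗ[ℂ] ℂ) (x : Fin 3 → V) :
    liftAlternating (liftF f) (ι ℂ (x 0) * ι ℂ (x 1) * ι ℂ (x 2)) = f x := by
  have h1 : ι ℂ (x 0) * ι ℂ (x 1) * ι ℂ (x 2) = ιMulti ℂ 3 x := by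
    simp [ιMulti_apply, List.ofFn_succ, mul_assoc, Matrix.vecTail]
  rw [h1, liftAlternating_apply_ιMulti]
  rfl

lemma wedge3_ne_zero (a b c : V) (h : LinearIndependent ℂ ![a, b, c]) :
    ι ℂ a * ι ℂ b * ι ℂ c ≠ 0 := by
  classical
  set v : Fin 3 → V := ![a, b, c] with hv
  -- the linear map `ℂ³ → V` sending `eᵢ ↦ v i`
  set f0 : (Fin 3 → ℂ) →ₗ[ℂ] V :=
    LinearMap.lsum ℂ (fun _ : Fin 3 => ℂ) ℕ fun i => LinearMap.id.smulRight (v i) with hf0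
  have hker : LinearMap.ker f0 = ⊥ := (Fintype.linearIndependent_iff').mp h
  obtain ⟨g, hg⟩ := f0.exists_leftInverse_of_injective hker
  have hgv : ∀ i, g (v i) = Pi.single i 1 := by
    intro i
    have h1 : f0 (Pi.single i 1) = v i := by
      simp [hf0, LinearMap.lsum_apply, Pi.single_apply, ite_smul]
    have := LinearMap.congr_fun hg (Pi.single i 1)
    simpa [h1] using this
  set f : V [⋀^Fin 3]→ₗ[ℂ] ℂ :=
    (Matrix.detRowAlternating : (Fin 3 → ℂ) [⋀^Fin 3]→ₗ[ℂ] ℂ).compLinearMap g with hf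
  have hmat : Matrix.of (⇑g ∘ v) = (1 : Matrix (Fin 3) (Fin 3) ℂ) := by
    ext i j
    simp [Function.comp, hgv i, Matrix.one_apply, Pi.single_apply, eq_comm]
  have hf1 : f v = 1 := by
    have h2 : f v = Matrix.det (Matrix.of (⇑g ∘ v)) := rfl
    rw [h2, hmat, Matrix.det_one]
  intro H
  have := liftF_eval f v
  rw [show v 0 = a from rfl, show v 1 = b from rfl, show v 2 = c from rfl, H, map_zero,
    hf1] at this
  exact one_ne_zero this.symm

lemma mem_span_pair_of_wedge (a b c : V) (hab : LinearIndependent ℂ ![a, b])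
    (h0 : ι ℂ c * ι ℂ a * ι ℂ b = 0) : c ∈ Submodule.span ℂ ({a, b} : Set V) := by
  by_contra hn
  have hr : c ∉ Submodule.span ℂ (Set.range ![a, b]) := by
    have : Set.range ![a, b] = ({a, b} : Set V) := by
      ext x; simp [Fin.exists_fin_two, or_comm]
    rwa [this]
  have hli : LinearIndependent ℂ (Fin.cons c ![a, b] : Fin 3 → V) :=
    linearIndependent_fin_cons.mpr ⟨hab, hr⟩
  have hli' : LinearIndependent ℂ ![c, a, b] := hli
  exact wedge3_ne_zero c a b hli' h0

/-- Let `v, u, w ∈ V = ℂ⁵` be linearly independent and `v' ∈ V` nonzero.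
Then both `v ∧ u` and `v ∧ w` lie in the subspace `v' ∧ V = {v' ∧ x : x ∈ V}` of `⋀²V` if
and only if `v' ∈ span{v}`.  In particular, the line `{[v ∧ (s·u + t·w)]}` on `Gr(2,5)` is
contained in the singular locus `ℙ(v' ∧ V)` of the quadric `q_{v'}` for exactly one point
`[v'] = [v]` of `ℙV`: any line on `Gr(2,5)` is contained in the singular locus of a unique
quadric containing `Gr(2,5)`. -/
theorem line_in_singular_locus_iff_span
    (v u w : V) (h : LinearIndependent ℂ ![v, u, w]) (v' : V) (hv' : v' ≠ 0) :
    ((∃ x : V, ι ℂ v' * ι ℂ x = ι ℂ v * ι ℂ u) ∧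
     (∃ y : V, ι ℂ v' * ι ℂ y = ι ℂ v * ι ℂ w)) ↔
      v' ∈ Submodule.span ℂ ({v} : Set V) := by
  constructor
  · rintro ⟨⟨x, hx⟩, ⟨y, hy⟩⟩
    -- wedging with `v'` kills both sides
    have h0u : ι ℂ v' * ι ℂ v * ι ℂ u = 0 := by
      rw [mul_assoc, ← hx, ← mul_assoc, ι_sq_zero, zero_mul]
    have h0w : ι ℂ v' * ι ℂ v * ι ℂ w = 0 := by
      rw [mul_assoc, ← hy, ← mul_assoc, ι_sq_zero, zero_mul]
    -- sub-families of `![v, u, w]` are linearly independent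
    have hvu : LinearIndependent ℂ ![v, u] := by
      have := h.comp ![0, 1] (by decide)
      have heq : ![v, u, w] ∘ ![0, 1] = ![v, u] := by
        funext i; fin_cases i <;> rfl
      rwa [heq] at this
    have hvw : LinearIndependent ℂ ![v, w] := by
      have := h.comp ![0, 2] (by decide)
      have heq : ![v, u, w] ∘ ![0, 2] = ![v, w] := by
        funext i; fin_cases i <;> rfl
      rwa [heq] at this
    have hmu := mem_span_pair_of_wedge v u v' hvu h0u
    have hmw := mem_span_pair_of_wedge v w v' hvw h0w
    obtain ⟨a, b, hab⟩ := Submodule.mem_span_pair.mp hmu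
    obtain ⟨cc, d, hcd⟩ := Submodule.mem_span_pair.mp hmw
    have hsum : ∑ i, (![a - cc, b, -d]) i • (![v, u, w]) i = 0 := by
      rw [Fin.sum_univ_three]
      show (a - cc) • v + b • u + (-d) • w = 0
      have : a • v + b • u - (cc • v + d • w) = 0 := by rw [hab, hcd]; abel
      rw [sub_smul, neg_smul]
      calc (a • v - cc • v) + b • u + -(d • w)
          = a • v + b • u - (cc • v + d • w) := by abel
        _ = 0 := this
    have hz := Fintype.linearIndependent_iff.mp h _ hsum
    have hb : b = 0 := hz 1
    have hv'eq : v' = a • v := by rw [← hab, hb]; simp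
    exact Submodule.mem_span_singleton.mpr ⟨a, hv'eq.symm⟩
  · intro hm
    obtain ⟨a, ha⟩ := Submodule.mem_span_singleton.mp hm
    have ha0 : a ≠ 0 := by
      rintro rfl; rw [zero_smul] at ha; exact hv' ha.symm
    constructor
    · refine ⟨a⁻¹ • u, ?_⟩
      rw [← ha, map_smul, map_smul, smul_mul_smul_comm, mul_inv_cancel₀ ha0, one_smul]
    · refine ⟨a⁻¹ • w, ?_⟩
      rw [← ha, map_smul, map_smul, smul_mul_smul_comm, mul_inv_cancel₀ ha0, one_smul]
end

section
/- Consider P = Σ_{σ,σ' ∈ S₅} X_{σ(1)σ(2)} · X_{σ(3)σ(4)} · X_{σ'(1)σ'(2)} · X_{σ'(3)σ'(4)} · X_{σ(5)σ'(5)} (where terms with σ(5) = σ'(5) are omitted) as a function of the variables X_{ij}. Then P is not invariant under inverting all variables, even modulo the condition that the product of the variables is 1: there exists a tuple (x_{ij})_{(i,j) ∈ I} of nonzero complex numbers with Π_{(i,j) ∈ I} x_{ij} = 1 such that P((x_{ij})) ≠ P((x_{ij}⁻¹)). -/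
/-- The index set `I = {(i,j) : 1 ≤ i < j ≤ 5}` (with `Fin 5` indexing `{1, …, 5}`). -/
abbrev Idx : Type := {p : Fin 5 × Fin 5 // p.1 < p.2}

/-- The variable `X_{ab}` for `a ≠ b`, namely `X_{(a,b)}` if `a < b` and `X_{(b,a)}` if
`b < a`; terms with `a = b` are omitted, i.e. contribute `0`. -/
noncomputable def Xab (a b : Fin 5) : MvPolynomial Idx ℂ :=
  if h : a < b then MvPolynomial.X ⟨(a, b), h⟩
  else if h' : b < a then MvPolynomial.X ⟨(b, a), h'⟩
  else 0

/-- The polynomial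
`P = Σ_{σ,σ' ∈ S₅} X_{σ(1)σ(2)} X_{σ(3)σ(4)} X_{σ'(1)σ'(2)} X_{σ'(3)σ'(4)} X_{σ(5)σ'(5)}`
(terms with `σ(5) = σ'(5)` contributing `0`). -/
noncomputable def P : MvPolynomial Idx ℂ :=
  ∑ σ : Equiv.Perm (Fin 5), ∑ σ' : Equiv.Perm (Fin 5),
    Xab (σ 0) (σ 1) * Xab (σ 2) (σ 3) * Xab (σ' 0) (σ' 1) * Xab (σ' 2) (σ' 3) *
      Xab (σ 4) (σ' 4)

/-- values of the witness -/
noncomputable def Cv : Fin 5 × Fin 5 → ℂ := fun p =>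
  if p = ((0:Fin 5),(1:Fin 5)) then 4
  else if p = ((0:Fin 5),(2:Fin 5)) then 2⁻¹
  else if p = ((0:Fin 5),(3:Fin 5)) then 2⁻¹ else 1

def Zv : Fin 5 × Fin 5 → ℤ := fun p =>
  if p = ((0:Fin 5),(1:Fin 5)) then 8
  else if p = ((0:Fin 5),(2:Fin 5)) then 1
  else if p = ((0:Fin 5),(3:Fin 5)) then 1 else 2

def Zv' : Fin 5 × Fin 5 → ℤ := fun p =>
  if p = ((0:Fin 5),(1:Fin 5)) then 1
  else if p = ((0:Fin 5),(2:Fin 5)) then 8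
  else if p = ((0:Fin 5),(3:Fin 5)) then 8 else 4

def zf (a b : Fin 5) : ℤ := if a < b then Zv (a,b) else if b < a then Zv (b,a) else 0
def zf' (a b : Fin 5) : ℤ := if a < b then Zv' (a,b) else if b < a then Zv' (b,a) else 0

noncomputable def xw : Idx → ℂ := fun i => Cv i.1

lemma evXab (a b : Fin 5) : MvPolynomial.eval xw (Xab a b) = (zf a b : ℂ) / 2 := by
  unfold Xab zf
  split_ifs with h1 h2
  · simp only [MvPolynomial.eval_X, xw, Cv, Zv]
    split_ifs <;> norm_num
  · simp only [MvPolynomial.eval_X, xw, Cv, Zv]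
    split_ifs <;> norm_num
  · simp

lemma evXab' (a b : Fin 5) :
    MvPolynomial.eval (fun i => (xw i)⁻¹) (Xab a b) = (zf' a b : ℂ) / 4 := by
  unfold Xab zf'
  split_ifs with h1 h2
  · simp only [MvPolynomial.eval_X, xw, Cv, Zv']
    split_ifs <;> norm_num
  · simp only [MvPolynomial.eval_X, xw, Cv, Zv']
    split_ifs <;> norm_num
  · simp

set_option maxRecDepth 10000000 in
lemma sum1 : (∑ σ : Equiv.Perm (Fin 5), ∑ σ' : Equiv.Perm (Fin 5),
    zf (σ 0) (σ 1) * zf (σ 2) (σ 3) * zf (σ' 0) (σ' 1) * zf (σ' 2) (σ' 3) * zf (σ 4) (σ' 4))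
    = 707584 := by decide

set_option maxRecDepth 10000000 in
lemma sum2 : (∑ σ : Equiv.Perm (Fin 5), ∑ σ' : Equiv.Perm (Fin 5),
    zf' (σ 0) (σ 1) * zf' (σ 2) (σ 3) * zf' (σ' 0) (σ' 1) * zf' (σ' 2) (σ' 3) * zf' (σ 4) (σ' 4))
    = 19324928 := by decide

lemma evalP1 : MvPolynomial.eval xw P = 22112 := by
  have : MvPolynomial.eval xw P
      = ((∑ σ : Equiv.Perm (Fin 5), ∑ σ' : Equiv.Perm (Fin 5),
          zf (σ 0) (σ 1) * zf (σ 2) (σ 3) * zf (σ' 0) (σ' 1) * zf (σ' 2) (σ' 3) *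
            zf (σ 4) (σ' 4) : ℤ) : ℂ) / 32 := by
    simp only [P, map_sum, map_mul, evXab]
    push_cast [Finset.sum_div]
    exact Finset.sum_congr rfl fun σ _ => Finset.sum_congr rfl fun σ' _ => by ring
  rw [this, sum1]; norm_num

lemma evalP2 : MvPolynomial.eval (fun i => (xw i)⁻¹) P = 18872 := by
  have : MvPolynomial.eval (fun i => (xw i)⁻¹) P
      = ((∑ σ : Equiv.Perm (Fin 5), ∑ σ' : Equiv.Perm (Fin 5),
          zf' (σ 0) (σ 1) * zf' (σ 2) (σ 3) * zf' (σ' 0) (σ' 1) * zf' (σ' 2) (σ' 3) *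
            zf' (σ 4) (σ' 4) : ℤ) : ℂ) / 1024 := by
    simp only [P, map_sum, map_mul, evXab']
    push_cast [Finset.sum_div]
    exact Finset.sum_congr rfl fun σ _ => Finset.sum_congr rfl fun σ' _ => by ring
  rw [this, sum2]; norm_num

/-- `P` is not invariant under inverting all variables, even modulo the
condition that the product of the variables is `1`: there are nonzero complex numbers
`x_{ij}` with `Π x_{ij} = 1` and `P((x_{ij})) ≠ P((x_{ij}⁻¹))`. -/
theorem P_not_invariant_under_inversion :
    ∃ x : Idx → ℂ, (∀ i, x i ≠ 0) ∧ (∏ i, x i = 1) ∧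
      MvPolynomial.eval x P ≠ MvPolynomial.eval (fun i => (x i)⁻¹) P := by
  refine ⟨xw, ?_, ?_, ?_⟩
  · intro i
    simp only [xw, Cv]
    split_ifs <;> norm_num
  · have h := Finset.prod_subtype (p := fun p : Fin 5 × Fin 5 => p.1 < p.2) (F := inferInstanceAs (Fintype Idx))
      (Finset.univ.filter fun p : Fin 5 × Fin 5 => p.1 < p.2) (fun p => by simp) Cv
    have h2 : (∏ i : Idx, xw i) = ∏ a : Idx, Cv a.1 := rfl
    rw [h2, ← h, Finset.prod_filter, Fintype.prod_prod_type]
    simp [Fin.prod_univ_five, Cv]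
    norm_num
  · rw [evalP1, evalP2]; norm_num
end
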